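/- arXiv:2311.07284 — 2 statements merged into one kernel-verified Lean document; each statement's English description precedes it below -/
import Mathlib

section
/- Let A, E be m×n real matrices with m ≥ n, and let Ã = A + E. If rank(A) = n and ‖E‖ ≤ σ_n(A)/2 (where σ_n(A) is the smallest singular value of A), then ‖A† − Ã†‖ ≤ 3‖A†‖²‖E‖. -/
/-!
With `B = A + E`, the identity
`A† - B† = A† (B - A) B† - (AᵀA)⁻¹ (B - A)ᵀ (1 - B B†)`,
together with `(AᵀA)⁻¹ = A† A†ᵀ` and the fact that `1 - B B†` is an orthogonal projection, gives
`‖A† - B†‖ ≤ ‖A†‖ ‖E‖ ‖B†‖ + ‖A†‖² ‖E‖`. By Weyl's inequality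
`σ_n(B) ≥ σ_n(A) - ‖E‖ ≥ σ_n(A) / 2`; since `‖B†‖ ≤ 1 / σ_n(B)` and `1 / σ_n(A) ≤ ‖A†‖`,
this yields `‖B†‖ ≤ 2 ‖A†‖`.
-/

open Matrix

/-- The Moore–Penrose pseudo-inverse of a full-column-rank matrix: `M† = (MᵀM)⁻¹Mᵀ`. -/
noncomputable def pinv {m r : ℕ} (M : Matrix (Fin m) (Fin r) ℝ) : Matrix (Fin r) (Fin m) ℝ :=
  (Mᵀ * M)⁻¹ * Mᵀ

/-- Operator (spectral) norm of a matrix, via its action between Euclidean spaces. -/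
noncomputable def opNorm {m r : ℕ} (A : Matrix (Fin m) (Fin r) ℝ) : ℝ :=
  ‖LinearMap.toContinuousLinearMap (Matrix.toEuclideanLin A)‖

/-- The smallest singular value `σ_r(A)` of an `m × r` matrix (`r ≤ m`),
characterized as the infimum of `‖Ax‖` over unit vectors `x`. -/
noncomputable def leastSingular {m r : ℕ} (A : Matrix (Fin m) (Fin r) ℝ) : ℝ :=
  sInf {c | ∃ x : EuclideanSpace ℝ (Fin r), ‖x‖ = 1 ∧ c = ‖Matrix.toEuclideanLin A x‖}

open scoped Matrix.Norms.L2Operator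

section

variable {m r : ℕ}

lemma opNorm_eq_norm (M : Matrix (Fin m) (Fin r) ℝ) : opNorm M = ‖M‖ := rfl

lemma toEuclideanLin_mul_apply {k : ℕ} (M : Matrix (Fin m) (Fin r) ℝ)
    (N : Matrix (Fin r) (Fin k) ℝ) (x : EuclideanSpace ℝ (Fin k)) :
    toEuclideanLin (M * N) x = toEuclideanLin M (toEuclideanLin N x) := by
  ext i
  simp [mulVec_mulVec]

lemma norm_toEuclideanLin_le (M : Matrix (Fin m) (Fin r) ℝ) (x : EuclideanSpace ℝ (Fin r)) :
    ‖toEuclideanLin M x‖ ≤ ‖M‖ * ‖x‖ :=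
  (LinearMap.toContinuousLinearMap (toEuclideanLin M)).le_opNorm x

lemma norm_transpose_eq (M : Matrix (Fin m) (Fin r) ℝ) : ‖Mᵀ‖ = ‖M‖ := by
  rw [← conjTranspose_eq_transpose_of_trivial, l2_opNorm_conjTranspose]

lemma isUnit_transpose_mul_self {M : Matrix (Fin m) (Fin r) ℝ}
    (hM : Function.Injective M.mulVec) : IsUnit (Mᵀ * M) := by
  simpa [conjTranspose_eq_transpose_of_trivial] using (PosDef.conjTranspose_mul_self M hM).isUnit

lemma mulVec_injective_of_rank_eq {M : Matrix (Fin m) (Fin r) ℝ} (hM : M.rank = r) :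
    Function.Injective M.mulVec := by
  have hker : Module.finrank ℝ (LinearMap.ker M.mulVecLin) = 0 := by
    have := LinearMap.finrank_range_add_finrank_ker M.mulVecLin
    rw [Module.finrank_fin_fun] at this
    change M.rank + _ = r at this
    omega
  exact LinearMap.ker_eq_bot.1 (Submodule.finrank_eq_zero.1 hker)

lemma pinv_mul_self {M : Matrix (Fin m) (Fin r) ℝ} (hM : IsUnit (Mᵀ * M)) : pinv M * M = 1 := by
  rw [pinv, Matrix.mul_assoc, nonsing_inv_mul _ ((isUnit_iff_isUnit_det _).1 hM)]

lemma transpose_pinv (M : Matrix (Fin m) (Fin r) ℝ) : (pinv M)ᵀ = M * (Mᵀ * M)⁻¹ := by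
  rw [pinv, transpose_mul, transpose_transpose, transpose_nonsing_inv, transpose_mul,
    transpose_transpose]

lemma inv_transpose_mul_self_eq {M : Matrix (Fin m) (Fin r) ℝ} (hM : IsUnit (Mᵀ * M)) :
    (Mᵀ * M)⁻¹ = pinv M * (pinv M)ᵀ := by
  rw [transpose_pinv, ← Matrix.mul_assoc, pinv_mul_self hM, Matrix.one_mul]

lemma isStarProjection_mul_pinv {M : Matrix (Fin m) (Fin r) ℝ} (hM : IsUnit (Mᵀ * M)) :
    IsStarProjection (M * pinv M) where
  isIdempotentElem := by
    rw [IsIdempotentElem, Matrix.mul_assoc, ← Matrix.mul_assoc (pinv M), pinv_mul_self hM,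
      Matrix.one_mul]
  isSelfAdjoint := by
    rw [IsSelfAdjoint, star_eq_conjTranspose, conjTranspose_eq_transpose_of_trivial,
      transpose_mul, transpose_pinv, pinv, Matrix.mul_assoc]

lemma pinv_sub_pinv {n : ℕ} {A B : Matrix (Fin m) (Fin n) ℝ} (hA : IsUnit (Aᵀ * A))
    (hB : IsUnit (Bᵀ * B)) :
    pinv A - pinv B
      = pinv A * (B - A) * pinv B - (Aᵀ * A)⁻¹ * (B - A)ᵀ * (1 - B * pinv B) := by
  have hAA (X : Matrix (Fin n) (Fin m) ℝ) : pinv A * (A * X) = X := by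
    rw [← Matrix.mul_assoc, pinv_mul_self hA, Matrix.one_mul]
  have hAt (X : Matrix (Fin m) (Fin m) ℝ) : (Aᵀ * A)⁻¹ * (Aᵀ * X) = pinv A * X := by
    rw [pinv, Matrix.mul_assoc]
  have hBt : Bᵀ * (B * pinv B) = Bᵀ := by
    rw [pinv, ← Matrix.mul_assoc, ← Matrix.mul_assoc,
      mul_nonsing_inv _ ((isUnit_iff_isUnit_det _).1 hB), Matrix.one_mul]
  simp only [transpose_sub, Matrix.sub_mul, Matrix.mul_sub, Matrix.mul_one, Matrix.mul_assoc,
    hAA, hAt, hBt]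
  rw [pinv]
  abel

lemma norm_pinv_sub_pinv_le {n : ℕ} {A B : Matrix (Fin m) (Fin n) ℝ} (hA : IsUnit (Aᵀ * A))
    (hB : IsUnit (Bᵀ * B)) :
    ‖pinv A - pinv B‖ ≤ ‖pinv A‖ * ‖B - A‖ * ‖pinv B‖ + ‖pinv A‖ ^ 2 * ‖B - A‖ := by
  have hproj : ‖(1 : Matrix (Fin m) (Fin m) ℝ) - B * pinv B‖ ≤ 1 :=
    (isStarProjection_mul_pinv hB).one_sub.norm_le
  have hinv : ‖(Aᵀ * A)⁻¹‖ ≤ ‖pinv A‖ ^ 2 := by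
    rw [inv_transpose_mul_self_eq hA]
    exact (l2_opNorm_mul _ _).trans_eq (by rw [norm_transpose_eq, sq])
  have h1 : ‖pinv A * (B - A) * pinv B‖ ≤ ‖pinv A‖ * ‖B - A‖ * ‖pinv B‖ :=
    (l2_opNorm_mul _ _).trans (mul_le_mul_of_nonneg_right (l2_opNorm_mul _ _) (norm_nonneg _))
  have h2 : ‖(Aᵀ * A)⁻¹ * (B - A)ᵀ * (1 - B * pinv B)‖ ≤ ‖pinv A‖ ^ 2 * ‖B - A‖ :=
    calc _ ≤ ‖(Aᵀ * A)⁻¹‖ * ‖(B - A)ᵀ‖ * ‖(1 : Matrix (Fin m) (Fin m) ℝ) - B * pinv B‖ :=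
          (l2_opNorm_mul _ _).trans
            (mul_le_mul_of_nonneg_right (l2_opNorm_mul _ _) (norm_nonneg _))
      _ ≤ ‖pinv A‖ ^ 2 * ‖B - A‖ * 1 := by
          rw [norm_transpose_eq]
          gcongr
      _ = _ := mul_one _
  rw [pinv_sub_pinv hA hB]
  exact (norm_sub_le _ _).trans (add_le_add h1 h2)

lemma leastSingular_mul_norm_le (M : Matrix (Fin m) (Fin r) ℝ) (x : EuclideanSpace ℝ (Fin r)) :
    leastSingular M * ‖x‖ ≤ ‖toEuclideanLin M x‖ := by
  rcases eq_or_ne x 0 with rfl | hx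
  · simp
  have hx' : 0 < ‖x‖ := norm_pos_iff.2 hx
  have hunit : ‖‖x‖⁻¹ • x‖ = 1 := by
    rw [norm_smul, norm_inv, norm_norm, inv_mul_cancel₀ hx'.ne']
  have hle : leastSingular M ≤ ‖toEuclideanLin M (‖x‖⁻¹ • x)‖ :=
    csInf_le ⟨0, fun _ ⟨_, _, hc⟩ => hc ▸ norm_nonneg _⟩ ⟨_, hunit, rfl⟩
  rw [map_smul, norm_smul, norm_inv, norm_norm] at hle
  rwa [le_inv_mul_iff₀ hx', mul_comm] at hle

lemma le_leastSingular (hr : 0 < r) {M : Matrix (Fin m) (Fin r) ℝ} {c : ℝ}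
    (h : ∀ x : EuclideanSpace ℝ (Fin r), c * ‖x‖ ≤ ‖toEuclideanLin M x‖) :
    c ≤ leastSingular M := by
  refine le_csInf ⟨_, EuclideanSpace.single ⟨0, hr⟩ 1, by simp, rfl⟩ ?_
  rintro _ ⟨x, hx, rfl⟩
  simpa [hx] using h x

lemma mulVec_injective_of_leastSingular_pos {M : Matrix (Fin m) (Fin r) ℝ}
    (hM : 0 < leastSingular M) : Function.Injective M.mulVec := by
  refine (injective_iff_map_eq_zero M.mulVecLin).2 fun v hv => ?_
  have h := leastSingular_mul_norm_le M (WithLp.toLp 2 v)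
  have h0 : toEuclideanLin M (WithLp.toLp 2 v) = 0 := by
    ext i
    simp [show M *ᵥ v = 0 from hv]
  rw [h0, norm_zero] at h
  have : ‖WithLp.toLp 2 v‖ = 0 :=
    le_antisymm (nonpos_of_mul_nonpos_right h hM) (norm_nonneg _)
  simpa using this

lemma leastSingular_sub_norm_le (hr : 0 < r) (A E : Matrix (Fin m) (Fin r) ℝ) :
    leastSingular A - ‖E‖ ≤ leastSingular (A + E) := by
  refine le_leastSingular hr fun x => ?_
  have hA := leastSingular_mul_norm_le A x
  have hE := norm_toEuclideanLin_le E x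
  have htri : ‖toEuclideanLin A x‖ ≤ ‖toEuclideanLin (A + E) x‖ + ‖toEuclideanLin E x‖ := by
    rw [map_add, LinearMap.add_apply]
    exact norm_le_add_norm_add _ _
  linarith [sub_mul (leastSingular A) ‖E‖ ‖x‖]

lemma one_le_norm_pinv_mul_leastSingular (hr : 0 < r) {M : Matrix (Fin m) (Fin r) ℝ}
    (hM : IsUnit (Mᵀ * M)) : 1 ≤ ‖pinv M‖ * leastSingular M := by
  have : NeZero r := ⟨hr.ne'⟩
  have hpos : 0 < ‖pinv M‖ := by
    refine norm_pos_iff.2 fun h0 => one_ne_zero (α := Matrix (Fin r) (Fin r) ℝ) ?_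
    rw [← pinv_mul_self hM, h0, Matrix.zero_mul]
  have hσ : ‖pinv M‖⁻¹ ≤ leastSingular M := by
    refine le_leastSingular hr fun x => ?_
    rw [inv_mul_le_iff₀ hpos]
    calc ‖x‖ = ‖toEuclideanLin (pinv M * M) x‖ := by rw [pinv_mul_self hM]; simp
      _ ≤ ‖pinv M‖ * ‖toEuclideanLin M x‖ := by
          rw [toEuclideanLin_mul_apply]
          exact norm_toEuclideanLin_le _ _
  calc 1 = ‖pinv M‖ * ‖pinv M‖⁻¹ := (mul_inv_cancel₀ hpos.ne').symm
    _ ≤ ‖pinv M‖ * leastSingular M := by gcongr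

lemma norm_pinv_le_inv_leastSingular {M : Matrix (Fin m) (Fin r) ℝ} (hM : 0 < leastSingular M) :
    ‖pinv M‖ ≤ (leastSingular M)⁻¹ := by
  have hU := isUnit_transpose_mul_self (mulVec_injective_of_leastSingular_pos hM)
  refine ContinuousLinearMap.opNorm_le_bound _ (inv_nonneg.2 hM.le) fun y => ?_
  rw [le_inv_mul_iff₀ hM]
  calc leastSingular M * ‖toEuclideanLin (pinv M) y‖
      ≤ ‖toEuclideanLin (M * pinv M) y‖ := by
        rw [toEuclideanLin_mul_apply]
        exact leastSingular_mul_norm_le _ _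
    _ ≤ ‖M * pinv M‖ * ‖y‖ := norm_toEuclideanLin_le _ _
    _ ≤ ‖y‖ := mul_le_of_le_one_left (norm_nonneg _) (isStarProjection_mul_pinv hU).norm_le

lemma leastSingular_pos (hr : 0 < r) {M : Matrix (Fin m) (Fin r) ℝ} (hM : IsUnit (Mᵀ * M)) :
    0 < leastSingular M :=
  pos_of_mul_pos_right (one_pos.trans_le (one_le_norm_pinv_mul_leastSingular hr hM))
    (norm_nonneg _)

lemma norm_pinv_le_two_mul (hr : 0 < r) {A B : Matrix (Fin m) (Fin r) ℝ} (hA : IsUnit (Aᵀ * A))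
    (hAB : leastSingular A / 2 ≤ leastSingular B) : ‖pinv B‖ ≤ 2 * ‖pinv A‖ := by
  have hσ := leastSingular_pos hr hA
  have hσα : (leastSingular A)⁻¹ ≤ ‖pinv A‖ :=
    (inv_le_iff_one_le_mul₀ hσ).2 (one_le_norm_pinv_mul_leastSingular hr hA)
  calc ‖pinv B‖ ≤ (leastSingular B)⁻¹ := norm_pinv_le_inv_leastSingular (by linarith)
    _ ≤ (leastSingular A / 2)⁻¹ := inv_anti₀ (by positivity) hAB
    _ = 2 * (leastSingular A)⁻¹ := by rw [inv_div, div_eq_mul_inv]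
    _ ≤ 2 * ‖pinv A‖ := by gcongr

end

theorem stmt4_general {m n : ℕ} (A E : Matrix (Fin m) (Fin n) ℝ)
    (hA : A.rank = n) (hE : opNorm E ≤ leastSingular A / 2) :
    opNorm (pinv A - pinv (A + E)) ≤ 3 * opNorm (pinv A) ^ 2 * opNorm E := by
  simp only [opNorm_eq_norm] at hE ⊢
  rcases n.eq_zero_or_pos with rfl | hn
  · rw [Subsingleton.elim (pinv A - pinv (A + E)) 0, norm_zero]
    positivity
  have hAu := isUnit_transpose_mul_self (mulVec_injective_of_rank_eq hA)
  have hσ := leastSingular_pos hn hAu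
  have hAE : leastSingular A / 2 ≤ leastSingular (A + E) := by
    linarith [leastSingular_sub_norm_le hn A E]
  have hAEu := isUnit_transpose_mul_self (mulVec_injective_of_leastSingular_pos (by linarith))
  have hβ := norm_pinv_le_two_mul hn hAu hAE
  have hdiff := norm_pinv_sub_pinv_le hAu hAEu
  rw [add_sub_cancel_left] at hdiff
  calc _ ≤ ‖pinv A‖ * ‖E‖ * ‖pinv (A + E)‖ + ‖pinv A‖ ^ 2 * ‖E‖ := hdiff
    _ ≤ ‖pinv A‖ * ‖E‖ * (2 * ‖pinv A‖) + ‖pinv A‖ ^ 2 * ‖E‖ := by gcongr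
    _ = 3 * ‖pinv A‖ ^ 2 * ‖E‖ := by ring

theorem stmt4 {m n : ℕ} (hmn : n ≤ m) (A E : Matrix (Fin m) (Fin n) ℝ)
    (hA : A.rank = n) (hE : opNorm E ≤ leastSingular A / 2) :
    opNorm (pinv A - pinv (A + E)) ≤ 3 * opNorm (pinv A) ^ 2 * opNorm E :=
  stmt4_general A E hA hE
end

section
/- Let U = (U_1,...,U_s) be an independent s-tuple of subspaces of W with direct sum U, let M be a U-associated matrix, and for λ ∈ R^s let the scaling map Σ_i λ_i P_i be the map that acts as λ_i times the identity on U_i (and zero on U^⊥), where P_i = M·Λ(e_i)·M†. Let M̂: R^s → Lin(U,U) be the map λ ↦ Σ_i λ_i P_i. Then ‖M̂‖ ≤ κ(M)·√(max_i dim U_i) and κ(M̂) ≤ κ(M)·√(max_i dim U_i / min_j dim U_j). -/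
/-- Largest singular value of the matrix whose columns are the vectors `v k`. -/
noncomputable def famSup {n : ℕ} {ι : Type} [Fintype ι] (v : ι → EuclideanSpace ℝ (Fin n)) : ℝ :=
  sSup {r | ∃ c : EuclideanSpace ℝ ι, ‖c‖ = 1 ∧ r = ‖∑ k, c k • v k‖}

/-- Smallest singular value of the matrix whose columns are the vectors `v k`. -/
noncomputable def famInf {n : ℕ} {ι : Type} [Fintype ι] (v : ι → EuclideanSpace ℝ (Fin n)) : ℝ :=
  sInf {r | ∃ c : EuclideanSpace ℝ ι, ‖c‖ = 1 ∧ r = ‖∑ k, c k • v k‖}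

/-- Frobenius (Hilbert–Schmidt) norm of a linear endomorphism of Euclidean space. -/
noncomputable def frob {n : ℕ}
    (T : EuclideanSpace ℝ (Fin n) →ₗ[ℝ] EuclideanSpace ℝ (Fin n)) : ℝ :=
  Real.sqrt (∑ k, ‖T (EuclideanSpace.single k 1)‖ ^ 2)

/-! On `V = ⨁ U i` the map `T λ = ∑ λ_i P_i` is `M Λ(λ) M†`, where `M†` sends `x` to the
coordinates, in the columns `v` of `M`, of its orthogonal projection onto `V`. Every row of `M†`
has norm at most `‖M†‖ = σ_min(M)⁻¹`, so `‖T λ‖_F ≤ σ_max(M) ‖Λ(λ) M†‖_F ≤ κ(M) ‖Λ(λ)‖_F`.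
Conversely, Gram–Schmidt along the flag `U 0 ⊆ U 0 ⊕ U 1 ⊆ ⋯` yields an orthonormal family in
which `T λ` is triangular with diagonal `Λ(λ)`, so `‖Λ(λ)‖_F ≤ ‖T λ‖_F` (Schur's inequality).
On the unit sphere `‖Λ(λ)‖_F² = ∑ dim U_i λ_i²` lies between `min dim U_i` and `max dim U_i`. -/

open Metric
open scoped RealInnerProductSpace

lemma setOf_exists_norm_eq_one_eq_image {X : Type*} [SeminormedAddCommGroup X] (f : X → ℝ) :
    {r | ∃ c : X, ‖c‖ = 1 ∧ r = f c} = f '' sphere 0 1 := by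
  ext r; simp [eq_comm]

section Homogeneous

variable {X : Type*} [NormedAddCommGroup X] [NormedSpace ℝ X] {g : X → ℝ}

lemma le_sSup_image_sphere_mul_norm (hg : ∀ (t : ℝ) (x : X), g (t • x) = |t| * g x)
    (hbdd : BddAbove (g '' sphere 0 1)) (a : X) :
    g a ≤ sSup (g '' sphere 0 1) * ‖a‖ := by
  rcases eq_or_ne a 0 with rfl | ha
  · simpa using (hg 0 0).le
  · have hmem : ‖a‖⁻¹ • a ∈ sphere (0 : X) 1 := by simp [norm_smul, ha]
    have := le_csSup hbdd (Set.mem_image_of_mem g hmem)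
    rw [hg, abs_inv, abs_norm] at this
    rwa [inv_mul_le_iff₀ (norm_pos_iff.mpr ha), mul_comm] at this

lemma sInf_image_sphere_mul_norm_le (hg : ∀ (t : ℝ) (x : X), g (t • x) = |t| * g x)
    (hbdd : BddBelow (g '' sphere 0 1)) (a : X) :
    sInf (g '' sphere 0 1) * ‖a‖ ≤ g a := by
  rcases eq_or_ne a 0 with rfl | ha
  · simpa using (hg 0 0).ge
  · have hmem : ‖a‖⁻¹ • a ∈ sphere (0 : X) 1 := by simp [norm_smul, ha]
    have := csInf_le hbdd (Set.mem_image_of_mem g hmem)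
    rw [hg, abs_inv, abs_norm] at this
    rwa [le_inv_mul_iff₀ (norm_pos_iff.mpr ha), mul_comm] at this

end Homogeneous

lemma sSup_image_le_and_div_sInf_image_le {X : Type*} {A : Set X} {f q : X → ℝ} {κ a b : ℝ}
    (hκ : 0 ≤ κ) (hf : ∀ x ∈ A, √(q x) ≤ f x ∧ f x ≤ κ * √(q x))
    (hq : ∀ x ∈ A, a ≤ q x ∧ q x ≤ b) (ha : ∃ x ∈ A, q x = a) :
    sSup (f '' A) ≤ κ * √b ∧ sSup (f '' A) / sInf (f '' A) ≤ κ * √(b / a) := by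
  obtain ⟨x₀, hx₀, hqx₀⟩ := ha
  have hf0 : ∀ r ∈ f '' A, 0 ≤ r := by
    rintro _ ⟨x, hx, rfl⟩; exact (Real.sqrt_nonneg _).trans (hf x hx).1
  have hsup : sSup (f '' A) ≤ κ * √b := Real.sSup_le (by
    rintro _ ⟨x, hx, rfl⟩
    exact (hf x hx).2.trans (by gcongr; exact (hq x hx).2)) (by positivity)
  refine ⟨hsup, ?_⟩
  rcases le_or_gt a 0 with ha0 | ha0
  -- then the infimum is `0`, and the quotient is `0` by the convention `x / 0 = 0`
  · have hinf : sInf (f '' A) = 0 := by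
      refine le_antisymm ?_ (Real.sInf_nonneg hf0)
      calc sInf (f '' A) ≤ f x₀ := csInf_le ⟨0, hf0⟩ (Set.mem_image_of_mem f hx₀)
        _ ≤ κ * √(q x₀) := (hf x₀ hx₀).2
        _ = 0 := by rw [hqx₀, Real.sqrt_eq_zero_of_nonpos ha0, mul_zero]
    rw [hinf, div_zero]
    positivity
  · have hinf : √a ≤ sInf (f '' A) := by
      refine le_csInf ⟨_, Set.mem_image_of_mem f hx₀⟩ ?_
      rintro _ ⟨x, hx, rfl⟩
      exact (Real.sqrt_le_sqrt (hq x hx).1).trans (hf x hx).1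
    calc sSup (f '' A) / sInf (f '' A) ≤ κ * √b / √a :=
          div_le_div₀ (by positivity) hsup (by positivity) hinf
      _ = κ * √(b / a) := by rw [Real.sqrt_div' _ ha0.le, mul_div_assoc]

section WeightedAverage

variable {ι : Type*} [Fintype ι] [Nonempty ι] (d : ι → ℕ) {p : ι → ℝ}

lemma inf'_le_sum_mul (hp : ∀ i, 0 ≤ p i) (hp1 : ∑ i, p i = 1) :
    ((Finset.univ.inf' Finset.univ_nonempty d : ℕ) : ℝ) ≤ ∑ i, (d i : ℝ) * p i :=
  calc _ = ∑ i, ((Finset.univ.inf' Finset.univ_nonempty d : ℕ) : ℝ) * p i := by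
        rw [← Finset.mul_sum, hp1, mul_one]
    _ ≤ _ := by
        gcongr with i
        · exact hp i
        · exact Finset.inf'_le d (Finset.mem_univ i)

lemma sum_mul_le_sup' (hp : ∀ i, 0 ≤ p i) (hp1 : ∑ i, p i = 1) :
    ∑ i, (d i : ℝ) * p i ≤ ((Finset.univ.sup' Finset.univ_nonempty d : ℕ) : ℝ) :=
  calc _ ≤ ∑ i, ((Finset.univ.sup' Finset.univ_nonempty d : ℕ) : ℝ) * p i := by
        gcongr with i
        · exact hp i
        · exact Finset.le_sup' d (Finset.mem_univ i)
    _ = _ := by rw [← Finset.mul_sum, hp1, mul_one]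

end WeightedAverage

lemma sum_sigma_fin_fst {ι R : Type*} [Fintype ι] [Semiring R] (d : ι → ℕ) (f : ι → R) :
    ∑ k : Σ i, Fin (d i), f k.1 = ∑ i, (d i : R) * f i := by
  simp [Fintype.sum_sigma]

lemma linearIndependent_sigma_of_iSupIndep {R M ι : Type*} [Ring R] [AddCommGroup M] [Module R M]
    {α : ι → Type*} {U : ι → Submodule R M} (hU : iSupIndep U) {v : (Σ i, α i) → M}
    (hv : ∀ i, LinearIndependent R fun j => v ⟨i, j⟩)
    (hvU : ∀ i, Submodule.span R (Set.range fun j => v ⟨i, j⟩) ≤ U i) :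
    LinearIndependent R v := by
  refine linearIndependent_iUnion_finite hv fun i t _ hit => (hU i).mono (hvU i) ?_
  exact iSup₂_le fun j hj => (hvU j).trans (le_iSup₂ (f := fun j (_ : j ≠ i) => U j) j
    fun h => hit (h ▸ hj))

lemma span_range_sigma {R M ι : Type*} [Semiring R] [AddCommMonoid M] [Module R M]
    {α : ι → Type*} (v : (Σ i, α i) → M) :
    Submodule.span R (Set.range v) = ⨆ i, Submodule.span R (Set.range fun j => v ⟨i, j⟩) := by
  rw [← Submodule.span_iUnion, Set.range_sigma_eq_iUnion_range]

section Projections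

variable {R M ι : Type*} [CommSemiring R] [AddCommMonoid M] [Module R M] [Fintype ι]
  {U : ι → Submodule R M} {P : ι → M →ₗ[R] M}

lemma sum_smul_apply_of_mem (hP1 : ∀ i, ∀ x ∈ U i, P i x = x)
    (hP2 : ∀ i j, i ≠ j → ∀ x ∈ U j, P i x = 0) (lam : ι → R) {i : ι} {x : M} (hx : x ∈ U i) :
    (∑ l, lam l • P l) x = lam i • x := by
  rw [LinearMap.sum_apply, Finset.sum_eq_single i]
  · simp [hP1 i x hx]
  · intro l _ hl; simp [hP2 l i hl x hx]
  · simp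

lemma sum_smul_apply_eq_zero {V : Submodule R M} (hP3 : ∀ i, ∀ x ∈ V, P i x = 0) (lam : ι → R)
    {x : M} (hx : x ∈ V) : (∑ l, lam l • P l) x = 0 := by
  simp [hP3 _ x hx]

end Projections

lemma norm_adjoint_apply_le {E F : Type*} [NormedAddCommGroup E] [InnerProductSpace ℝ E]
    [FiniteDimensional ℝ E] [NormedAddCommGroup F] [InnerProductSpace ℝ F]
    [FiniteDimensional ℝ F] {A : E →ₗ[ℝ] F} {c : ℝ} (hc : 0 ≤ c)
    (hA : ∀ x, ‖A x‖ ≤ c * ‖x‖) (y : F) :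
    ‖LinearMap.adjoint A y‖ ≤ c * ‖y‖ := by
  set z := LinearMap.adjoint A y
  have hz : ‖z‖ ^ 2 ≤ c * ‖y‖ * ‖z‖ :=
    calc ‖z‖ ^ 2 = ⟪A z, y⟫ := by rw [← real_inner_self_eq_norm_sq, LinearMap.adjoint_inner_right]
      _ ≤ ‖A z‖ * ‖y‖ := real_inner_le_norm _ _
      _ ≤ c * ‖z‖ * ‖y‖ := by gcongr; exact hA z
      _ = c * ‖y‖ * ‖z‖ := by ring
  rcases (norm_nonneg z).eq_or_lt with h0 | hpos
  · rw [← h0]; positivity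
  · nlinarith

section Flag

variable {E : Type*} [NormedAddCommGroup E] [InnerProductSpace ℝ E]

lemma finrank_sup_inf_orthogonal [FiniteDimensional ℝ E] {K U : Submodule ℝ E} (h : Disjoint K U) :
    Module.finrank ℝ ↥((K ⊔ U) ⊓ Kᗮ) = Module.finrank ℝ U := by
  have h1 := Submodule.finrank_add_inf_finrank_orthogonal (K₁ := K) (K₂ := K ⊔ U) le_sup_left
  have h2 := Submodule.finrank_sup_add_finrank_inf_eq K U
  rw [h.eq_bot, finrank_bot, add_zero] at h2
  rw [inf_comm]
  omega

lemma inner_apply_self_of_mem_sup_inf_orthogonal {K U : Submodule ℝ E} {T : E →ₗ[ℝ] E}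
    (hK : ∀ p ∈ K, T p ∈ K) {c : ℝ} (hU : ∀ u ∈ U, T u = c • u) {x : E}
    (hx : x ∈ (K ⊔ U) ⊓ Kᗮ) : ⟪x, T x⟫ = c * ‖x‖ ^ 2 := by
  obtain ⟨hxsup, hxK⟩ := hx
  obtain ⟨p, hp, u, hu, rfl⟩ := Submodule.mem_sup.mp hxsup
  have hp0 : ⟪p + u, p⟫ = 0 := Submodule.inner_left_of_mem_orthogonal hp hxK
  have hTp0 : ⟪p + u, T p⟫ = 0 := Submodule.inner_left_of_mem_orthogonal (hK p hp) hxK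
  rw [map_add, hU u hu, inner_add_right, hTp0, real_inner_smul_right, ← real_inner_self_eq_norm_sq,
    inner_add_right _ p u, hp0, zero_add, zero_add]

lemma exists_orthonormal_inner_apply_self_eq [FiniteDimensional ℝ E] {ι : Type*} [LinearOrder ι]
    {U : ι → Submodule ℝ E} (hU : iSupIndep U) {d : ι → ℕ}
    (hd : ∀ i, Module.finrank ℝ (U i) = d i) {T : E →ₗ[ℝ] E} {lam : ι → ℝ}
    (hT : ∀ i, ∀ x ∈ U i, T x = lam i • x) :
    ∃ w : (Σ i, Fin (d i)) → E, Orthonormal ℝ w ∧ ∀ k, ⟪w k, T (w k)⟫ = lam k.1 := by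
  set K : ι → Submodule ℝ E := fun i => ⨆ j < i, U j
  -- Gram–Schmidt along the flag `K i ≤ K i ⊔ U i`; `T` preserves every `K i`, hence is
  -- triangular in any orthonormal family adapted to the `W i`.
  set W : ι → Submodule ℝ E := fun i => (K i ⊔ U i) ⊓ (K i)ᗮ
  have hKinv : ∀ i, ∀ p ∈ K i, T p ∈ K i := fun i =>
    show K i ≤ (K i).comap T from iSup₂_le fun j hj x hx => by
      simpa [hT j x hx] using
        Submodule.smul_mem _ (lam j) ((le_iSup₂ (f := fun j (_ : j < i) => U j) j hj) hx)
  have hWK : ∀ i j, i < j → W i ≤ K j := fun i j hij =>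
    inf_le_left.trans <| sup_le
      (iSup₂_le fun l hl => le_iSup₂ (f := fun l (_ : l < j) => U l) l (hl.trans hij))
      (le_iSup₂ (f := fun l (_ : l < j) => U l) i hij)
  have hW : Pairwise fun i j => W i ⟂ W j := by
    have hlt : ∀ i j, i < j → W i ⟂ W j := fun i j hij =>
      (Submodule.isOrtho_orthogonal_right (K j)).mono (hWK i j hij) inf_le_right
    intro i j hij
    rcases hij.lt_or_gt with h | h
    · exact hlt i j h
    · exact (hlt j i h).symm
  have hWrank : ∀ i, Module.finrank ℝ (W i) = d i := fun i => by
    rw [← hd i]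
    refine finrank_sup_inf_orthogonal (Disjoint.symm ((hU i).mono_right ?_))
    exact iSup₂_le fun j hj => le_iSup₂ (f := fun j (_ : j ≠ i) => U j) j hj.ne
  let b : ∀ i, OrthonormalBasis (Fin (d i)) ℝ (W i) := fun i =>
    (stdOrthonormalBasis ℝ (W i)).reindex (finCongr (hWrank i))
  refine ⟨fun k => b k.1 k.2,
    (OrthogonalFamily.of_pairwise hW).orthonormal_sigma_orthonormal fun i => (b i).orthonormal,
    fun k => ?_⟩
  rw [inner_apply_self_of_mem_sup_inf_orthogonal (hKinv k.1) (hT k.1) (b k.1 k.2).2]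
  rw [show ‖(b k.1 k.2 : E)‖ = 1 from (b k.1).orthonormal.1 k.2, one_pow, mul_one]

end Flag

section SingularValues

variable {n : ℕ} {ι : Type} [Fintype ι] (v : ι → EuclideanSpace ℝ (Fin n))

lemma famSup_eq :
    famSup v = sSup ((fun c : EuclideanSpace ℝ ι => ‖∑ k, c k • v k‖) '' sphere 0 1) := by
  rw [famSup, setOf_exists_norm_eq_one_eq_image]

lemma famInf_eq :
    famInf v = sInf ((fun c : EuclideanSpace ℝ ι => ‖∑ k, c k • v k‖) '' sphere 0 1) := by
  rw [famInf, setOf_exists_norm_eq_one_eq_image]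

lemma norm_sum_smul_smul (t : ℝ) (c : EuclideanSpace ℝ ι) :
    ‖∑ k, (t • c) k • v k‖ = |t| * ‖∑ k, c k • v k‖ := by
  simp_rw [PiLp.smul_apply, smul_eq_mul, mul_smul, ← Finset.smul_sum, norm_smul, Real.norm_eq_abs]

lemma continuous_norm_sum_smul : Continuous fun c : EuclideanSpace ℝ ι => ‖∑ k, c k • v k‖ := by
  fun_prop

lemma norm_sum_smul_le_famSup_mul (a : EuclideanSpace ℝ ι) :
    ‖∑ k, a k • v k‖ ≤ famSup v * ‖a‖ := by
  rw [famSup_eq]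
  exact le_sSup_image_sphere_mul_norm (norm_sum_smul_smul v)
    ((isCompact_sphere 0 1).bddAbove_image (continuous_norm_sum_smul v).continuousOn) a

lemma famInf_mul_le_norm_sum_smul (a : EuclideanSpace ℝ ι) :
    famInf v * ‖a‖ ≤ ‖∑ k, a k • v k‖ := by
  rw [famInf_eq]
  exact sInf_image_sphere_mul_norm_le (norm_sum_smul_smul v)
    ⟨0, by rintro _ ⟨c, -, rfl⟩; positivity⟩ a

lemma famSup_nonneg : 0 ≤ famSup v :=
  Real.sSup_nonneg (by rintro _ ⟨c, -, rfl⟩; positivity)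

lemma famInf_nonneg : 0 ≤ famInf v :=
  Real.sInf_nonneg (by rintro _ ⟨c, -, rfl⟩; positivity)

lemma famInf_pos [Nonempty ι] {v : ι → EuclideanSpace ℝ (Fin n)} (hv : LinearIndependent ℝ v) :
    0 < famInf v := by
  classical
  obtain ⟨c, hc, hmin⟩ := (isCompact_sphere (0 : EuclideanSpace ℝ ι) 1).exists_isMinOn
    (NormedSpace.sphere_nonempty.mpr zero_le_one) (continuous_norm_sum_smul v).continuousOn
  have hc0 : c ≠ 0 := ne_zero_of_mem_unit_sphere ⟨c, hc⟩
  have hpos : 0 < ‖∑ k, c k • v k‖ := by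
    refine norm_pos_iff.mpr fun h0 => hc0 ?_
    ext k
    exact Fintype.linearIndependent_iff.mp hv _ h0 k
  rw [famInf_eq]
  refine hpos.trans_le (le_csInf ⟨_, Set.mem_image_of_mem _ hc⟩ ?_)
  rintro _ ⟨c', hc', rfl⟩
  exact hmin hc'

end SingularValues

section Frobenius

variable {n : ℕ}

local notation "E" => EuclideanSpace ℝ (Fin n)

lemma frob_sq (T : E →ₗ[ℝ] E) : frob T ^ 2 = ∑ k, ‖T (EuclideanSpace.single k 1)‖ ^ 2 :=
  Real.sq_sqrt (by positivity)

lemma norm_sq_eq_sum_sq_inner_single (x : E) :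
    ‖x‖ ^ 2 = ∑ k, ⟪EuclideanSpace.single k 1, x⟫ ^ 2 := by
  simp [← (EuclideanSpace.basisFun (Fin n) ℝ).sum_sq_inner_right x]

lemma frob_adjoint (T : E →ₗ[ℝ] E) : frob (LinearMap.adjoint T) = frob T := by
  rw [frob, frob]
  congr 1
  simp_rw [norm_sq_eq_sum_sq_inner_single, LinearMap.adjoint_inner_right]
  rw [Finset.sum_comm]
  simp_rw [real_inner_comm]

lemma sum_norm_sq_apply_le_frob_sq {κ : Type*} [Fintype κ] {w : κ → E} (hw : Orthonormal ℝ w)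
    (T : E →ₗ[ℝ] E) : ∑ k, ‖T (w k)‖ ^ 2 ≤ frob T ^ 2 := by
  rw [← frob_adjoint, frob_sq]
  calc ∑ k, ‖T (w k)‖ ^ 2
      = ∑ j, ∑ k, ⟪w k, LinearMap.adjoint T (EuclideanSpace.single j 1)⟫ ^ 2 := by
        simp_rw [norm_sq_eq_sum_sq_inner_single (T _), LinearMap.adjoint_inner_right,
          real_inner_comm (T _)]
        exact Finset.sum_comm
    _ ≤ _ := by
        gcongr with j
        simpa [sq_abs] using hw.sum_inner_products_le (s := Finset.univ)
          (LinearMap.adjoint T (EuclideanSpace.single j 1))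

lemma sum_sq_le_frob_sq_of_orthonormal {κ : Type*} [Fintype κ] {w : κ → E}
    (hw : Orthonormal ℝ w) {T : E →ₗ[ℝ] E} {μ : κ → ℝ}
    (hT : ∀ k, ⟪w k, T (w k)⟫ = μ k) : ∑ k, μ k ^ 2 ≤ frob T ^ 2 :=
  calc ∑ k, μ k ^ 2 ≤ ∑ k, ‖T (w k)‖ ^ 2 := by
        refine Finset.sum_le_sum fun k _ => ?_
        rw [← hT, ← sq_abs]
        exact pow_le_pow_left₀ (abs_nonneg _)
          (by simpa [hw.1 k] using abs_real_inner_le_norm (w k) (T (w k))) 2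
    _ ≤ frob T ^ 2 := sum_norm_sq_apply_le_frob_sq hw T

end Frobenius

section PseudoInverse

variable {n : ℕ} {ι : Type} [Fintype ι] {v : ι → EuclideanSpace ℝ (Fin n)}

/-- The matrix `M†`: coordinates in the basis `v` of the orthogonal projection onto `span v`. -/
noncomputable def famPinv (hv : LinearIndependent ℝ v) :
    EuclideanSpace ℝ (Fin n) →ₗ[ℝ] EuclideanSpace ℝ ι :=
  (WithLp.linearEquiv 2 ℝ (ι → ℝ)).symm.toLinearMap ∘ₗ Finsupp.lcoeFun ∘ₗ
    (Module.Basis.span hv).repr.toLinearMap ∘ₗ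
    (Submodule.span ℝ (Set.range v)).orthogonalProjectionOnto.toLinearMap

lemma sum_famPinv_smul (hv : LinearIndependent ℝ v) (x : EuclideanSpace ℝ (Fin n)) :
    ∑ k, famPinv hv x k • v k = (Submodule.span ℝ (Set.range v)).starProjection x := by
  classical
  rw [Submodule.starProjection_apply, ← (Module.Basis.span hv).sum_repr
    ((Submodule.span ℝ (Set.range v)).orthogonalProjectionOnto x)]
  simp [famPinv]

lemma famInf_mul_norm_famPinv_le (hv : LinearIndependent ℝ v) (x : EuclideanSpace ℝ (Fin n)) :
    famInf v * ‖famPinv hv x‖ ≤ ‖x‖ :=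
  calc famInf v * ‖famPinv hv x‖ ≤ ‖∑ k, famPinv hv x k • v k‖ := famInf_mul_le_norm_sum_smul v _
    _ ≤ ‖x‖ := by rw [sum_famPinv_smul]; exact Submodule.norm_starProjection_apply_le _ x

lemma sum_sq_famPinv_single_le (hv : LinearIndependent ℝ v) (k : ι) :
    ∑ j, famPinv hv (EuclideanSpace.single j 1) k ^ 2 ≤ (famInf v)⁻¹ ^ 2 := by
  classical
  have : Nonempty ι := ⟨k⟩
  have hpos := famInf_pos hv
  have hbound : ∀ x, ‖famPinv hv x‖ ≤ (famInf v)⁻¹ * ‖x‖ := fun x => by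
    rw [le_inv_mul_iff₀ hpos]; exact famInf_mul_norm_famPinv_le hv x
  calc ∑ j, famPinv hv (EuclideanSpace.single j 1) k ^ 2
      = ‖LinearMap.adjoint (famPinv hv) (EuclideanSpace.single k 1)‖ ^ 2 := by
        rw [norm_sq_eq_sum_sq_inner_single]
        simp [LinearMap.adjoint_inner_right, EuclideanSpace.inner_single_right]
    _ ≤ ((famInf v)⁻¹ * ‖(EuclideanSpace.single k 1 : EuclideanSpace ℝ ι)‖) ^ 2 := by
        gcongr
        exact norm_adjoint_apply_le (by positivity) hbound _
    _ = (famInf v)⁻¹ ^ 2 := by simp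

lemma apply_eq_sum_famPinv_smul (hv : LinearIndependent ℝ v) {μ : ι → ℝ}
    {T : EuclideanSpace ℝ (Fin n) →ₗ[ℝ] EuclideanSpace ℝ (Fin n)}
    (hTv : ∀ k, T (v k) = μ k • v k) (hT0 : ∀ x ∈ (Submodule.span ℝ (Set.range v))ᗮ, T x = 0)
    (x : EuclideanSpace ℝ (Fin n)) : T x = ∑ k, (μ k * famPinv hv x k) • v k := by
  set K := Submodule.span ℝ (Set.range v)
  calc T x = T (K.starProjection x) + T (x - K.starProjection x) := by
        rw [← map_add, add_sub_cancel]
    _ = ∑ k, (μ k * famPinv hv x k) • v k := by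
        rw [hT0 _ (K.sub_starProjection_mem_orthogonal x), add_zero, ← sum_famPinv_smul hv, map_sum]
        simp_rw [map_smul, hTv, smul_smul, mul_comm]

lemma frob_le_of_apply_eq_sum_smul (hv : LinearIndependent ℝ v) (μ : ι → ℝ)
    {T : EuclideanSpace ℝ (Fin n) →ₗ[ℝ] EuclideanSpace ℝ (Fin n)}
    (hT : ∀ x, T x = ∑ k, (μ k * famPinv hv x k) • v k) :
    frob T ≤ famSup v / famInf v * √(∑ k, μ k ^ 2) := by
  let a : Fin n → EuclideanSpace ℝ ι := fun j =>
    WithLp.toLp 2 fun k => μ k * famPinv hv (EuclideanSpace.single j 1) k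
  have hsq : frob T ^ 2 ≤ (famSup v / famInf v * √(∑ k, μ k ^ 2)) ^ 2 := by
    rw [mul_pow, Real.sq_sqrt (by positivity), frob_sq]
    calc ∑ j, ‖T (EuclideanSpace.single j 1)‖ ^ 2 ≤ ∑ j, (famSup v * ‖a j‖) ^ 2 := by
          refine Finset.sum_le_sum fun j _ => pow_le_pow_left₀ (norm_nonneg _) ?_ 2
          rw [hT]
          exact norm_sum_smul_le_famSup_mul v (a j)
      _ = famSup v ^ 2 * ∑ k, μ k ^ 2 * ∑ j, famPinv hv (EuclideanSpace.single j 1) k ^ 2 := by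
          simp_rw [a, mul_pow, EuclideanSpace.real_norm_sq_eq, mul_pow, Finset.mul_sum]
          rw [Finset.sum_comm]
      _ ≤ famSup v ^ 2 * ∑ k, μ k ^ 2 * (famInf v)⁻¹ ^ 2 := by
          gcongr with k
          exact sum_sq_famPinv_single_le hv k
      _ = (famSup v / famInf v) ^ 2 * ∑ k, μ k ^ 2 := by
          rw [← Finset.sum_mul, div_eq_mul_inv, mul_pow]; ring
  have := famSup_nonneg v
  have := famInf_nonneg v
  exact le_of_sq_le_sq hsq (by positivity)

end PseudoInverse

section Blocks

variable {n : ℕ} {ι : Type} [Fintype ι] {d : ι → ℕ}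
  {U : ι → Submodule ℝ (EuclideanSpace ℝ (Fin n))}
  {T : EuclideanSpace ℝ (Fin n) →ₗ[ℝ] EuclideanSpace ℝ (Fin n)} {lam : ι → ℝ}

lemma sqrt_sum_mul_sq_le_frob [LinearOrder ι] (hU : iSupIndep U)
    (hd : ∀ i, Module.finrank ℝ (U i) = d i) (hTU : ∀ i, ∀ x ∈ U i, T x = lam i • x) :
    √(∑ i, (d i : ℝ) * lam i ^ 2) ≤ frob T := by
  obtain ⟨w, hw, hwT⟩ := exists_orthonormal_inner_apply_self_eq hU hd hTU
  rw [← sum_sigma_fin_fst d fun i => lam i ^ 2]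
  exact Real.sqrt_le_iff.mpr ⟨Real.sqrt_nonneg _, sum_sq_le_frob_sq_of_orthonormal hw hwT⟩

lemma frob_le_famSup_div_famInf_mul_sqrt (hU : iSupIndep U)
    {v : (Σ i, Fin (d i)) → EuclideanSpace ℝ (Fin n)}
    (hON : ∀ i, Orthonormal ℝ fun j : Fin (d i) => v ⟨i, j⟩)
    (hspan : ∀ i, Submodule.span ℝ (Set.range fun j : Fin (d i) => v ⟨i, j⟩) = U i)
    (hTU : ∀ i, ∀ x ∈ U i, T x = lam i • x) (hT0 : ∀ x ∈ (⨆ i, U i)ᗮ, T x = 0) :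
    frob T ≤ famSup v / famInf v * √(∑ i, (d i : ℝ) * lam i ^ 2) := by
  have hv : LinearIndependent ℝ v := linearIndependent_sigma_of_iSupIndep hU
    (fun i => (hON i).linearIndependent) (fun i => (hspan i).le)
  have hvU : ∀ k, v k ∈ U k.1 := fun k => hspan k.1 ▸ Submodule.subset_span ⟨k.2, rfl⟩
  have hT := apply_eq_sum_famPinv_smul hv (μ := fun k => lam k.1)
    (fun k => hTU k.1 _ (hvU k)) (by simpa only [span_range_sigma, hspan] using hT0)
  rw [← sum_sigma_fin_fst d fun i => lam i ^ 2]
  exact frob_le_of_apply_eq_sum_smul hv _ hT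

end Blocks

theorem stmt7 {n s : ℕ} [NeZero s] (d : Fin s → ℕ)
    (U : Fin s → Submodule ℝ (EuclideanSpace ℝ (Fin n)))
    (hIndep : iSupIndep U)
    (hd : ∀ i, Module.finrank ℝ (U i) = d i)
    -- `v` lists the columns of a `U`-associated matrix `M`
    (v : (Σ i : Fin s, Fin (d i)) → EuclideanSpace ℝ (Fin n))
    (hON : ∀ i : Fin s, Orthonormal ℝ (fun j : Fin (d i) => v ⟨i, j⟩))
    (hspan : ∀ i : Fin s,
      Submodule.span ℝ (Set.range fun j : Fin (d i) => v ⟨i, j⟩) = U i)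
    (κM : ℝ) (hκM : κM = famSup v / famInf v)
    -- `P i` is the projection onto `U i` along the other components, zero on `U^⊥`
    (P : Fin s → (EuclideanSpace ℝ (Fin n) →ₗ[ℝ] EuclideanSpace ℝ (Fin n)))
    (hP1 : ∀ i, ∀ x ∈ U i, P i x = x)
    (hP2 : ∀ i j, i ≠ j → ∀ x ∈ U j, P i x = 0)
    (hP3 : ∀ i, ∀ x ∈ (⨆ i, U i)ᗮ, P i x = 0)
    -- the operator norm and smallest singular value of `M̂ : λ ↦ ∑ λ_i P_i`,
    -- with Frobenius norm on the codomain `Lin(U,U)`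
    (Mhat MhatLeast : ℝ)
    (hMhat : Mhat = sSup {r | ∃ lam : EuclideanSpace ℝ (Fin s), ‖lam‖ = 1 ∧
        r = frob (∑ i, lam i • P i)})
    (hMhatLeast : MhatLeast = sInf {r | ∃ lam : EuclideanSpace ℝ (Fin s), ‖lam‖ = 1 ∧
        r = frob (∑ i, lam i • P i)}) :
    Mhat ≤ κM * Real.sqrt ((Finset.univ.sup' Finset.univ_nonempty d : ℕ) : ℝ) ∧
      Mhat / MhatLeast ≤
        κM * Real.sqrt (((Finset.univ.sup' Finset.univ_nonempty d : ℕ) : ℝ) / ((Finset.univ.inf' Finset.univ_nonempty d : ℕ) : ℝ)) := by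
  classical
  have hκ : 0 ≤ κM := hκM ▸ div_nonneg (famSup_nonneg v) (famInf_nonneg v)
  have hq : ∀ lam ∈ sphere (0 : EuclideanSpace ℝ (Fin s)) 1,
      ((Finset.univ.inf' Finset.univ_nonempty d : ℕ) : ℝ) ≤ ∑ i, (d i : ℝ) * lam i ^ 2 ∧
        ∑ i, (d i : ℝ) * lam i ^ 2 ≤ ((Finset.univ.sup' Finset.univ_nonempty d : ℕ) : ℝ) := by
    intro lam hlam
    have hp1 : ∑ i, lam i ^ 2 = 1 := by
      rw [← EuclideanSpace.real_norm_sq_eq, mem_sphere_zero_iff_norm.mp hlam, one_pow]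
    exact ⟨inf'_le_sum_mul d (fun _ => sq_nonneg _) hp1,
      sum_mul_le_sup' d (fun _ => sq_nonneg _) hp1⟩
  obtain ⟨i₀, -, hi₀⟩ := Finset.exists_mem_eq_inf' Finset.univ_nonempty d
  rw [hMhat, hMhatLeast, setOf_exists_norm_eq_one_eq_image]
  refine sSup_image_le_and_div_sInf_image_le hκ (fun lam _ => ?_) hq
    ⟨EuclideanSpace.single i₀ 1, by simp, by simp [hi₀]⟩
  have hTU := fun i x (hx : x ∈ U i) => sum_smul_apply_of_mem hP1 hP2 (fun l => lam l) hx
  exact ⟨sqrt_sum_mul_sq_le_frob hIndep hd hTU, hκM ▸ frob_le_famSup_div_famInf_mul_sqrt hIndep hON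
    hspan hTU fun x hx => sum_smul_apply_eq_zero hP3 (fun l => lam l) hx⟩
end
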